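/- Let 0 < α ≤ 1 and define p₁ : ℝ → ℝ by p₁(x) = (1/π) ∫₀^∞ cos(ux) e^{−u^α} du. Then there exists a constant c < ∞ such that |x|^{α+1} |p₁(x)| ≤ c for all x ∈ ℝ. -/

import Mathlib

/-!
Put `h = π / x` and `I(F) = ∫₀^∞ cos (u x) F u du`. Since `cos ((u + h) x) = - cos (u x)`,
the forward difference satisfies `I(Δ_[h] F) = ∫₀^h cos (u x) F u du - 2 I(F)`. Applied twice
to `F u = exp (-u ^ α)`, which is decreasing and (for `α ≤ 1`) convex, this writes `4 I(F)`
through integrals over `[0, h]` of `cos (u x) (F u - F 0)` and `cos (u x) Δ_[h] F u`, and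
`I(Δ_[h]² F)`. Each is at most `h (F 0 - F h) ≤ h ^ (α + 1)` in absolute value: the first two
because `F` and `Δ_[h] F` are monotone, the last because `Δ_[h]² F ≥ 0` and
`∫₀^∞ Δ_[h]² F = -∫₀^h Δ_[h] F`.
-/

open MeasureTheory Real Set
open scoped fwdDiff

theorem ConvexOn.fwdDiff_le_fwdDiff {𝕜 : Type*} [Field 𝕜] [LinearOrder 𝕜] [IsStrictOrderedRing 𝕜]
    {s : Set 𝕜} {f : 𝕜 → 𝕜} (hf : ConvexOn 𝕜 s f) {a b h : 𝕜} (ha : a ∈ s) (hbh : b + h ∈ s)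
    (hab : a ≤ b) (hh : 0 ≤ h) : Δ_[h] f a ≤ Δ_[h] f b := by
  rcases hh.eq_or_lt with rfl | hh
  · simp [fwdDiff]
  have hmem : ∀ y ∈ Icc a (b + h), y ∈ s := hf.1.ordConnected.out ha hbh
  have hah : a + h ∈ s := hmem _ ⟨by linarith, by linarith⟩
  have hb : b ∈ s := hmem _ ⟨hab, by linarith⟩
  have h₁ := hf.secant_mono ha hah hbh (by linarith) (by linarith) (by linarith)
  have h₂ := hf.secant_mono hbh ha hb (by linarith) (by linarith) hab
  rw [add_sub_cancel_left] at h₁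
  rw [sub_add_cancel_left, div_neg, ← neg_div, neg_sub] at h₂
  rw [fwdDiff, fwdDiff, ← div_le_div_iff_of_pos_right hh]
  calc (f (a + h) - f a) / h ≤ (f (b + h) - f a) / (b + h - a) := h₁
    _ = (f a - f (b + h)) / (a - (b + h)) := by rw [← neg_div_neg_eq, neg_sub, neg_sub]
    _ ≤ (f (b + h) - f b) / h := h₂

section HalfLineIntegrals

variable {E : Type*} [NormedAddCommGroup E] {G : ℝ → E} {a h : ℝ}

theorem setIntegral_Ioi_comp_add_right [NormedSpace ℝ E] (G : ℝ → E) (a c : ℝ) :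
    ∫ u in Ioi a, G (u + c) = ∫ u in Ioi (a + c), G u := by
  simpa using (measurePreserving_add_right volume c).setIntegral_preimage_emb
    (MeasurableEquiv.addRight c).measurableEmbedding G (Ioi (a + c))

theorem MeasureTheory.IntegrableOn.comp_add_right_Ioi (hG : IntegrableOn G (Ioi a))
    (hh : 0 ≤ h) : IntegrableOn (fun u => G (u + h)) (Ioi a) := by
  have hG' : IntegrableOn G (Ioi (a + h)) := hG.mono_set (Ioi_subset_Ioi (by linarith))
  simpa [Function.comp_def] using ((measurePreserving_add_right volume h).integrableOn_comp_preimage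
    (MeasurableEquiv.addRight h).measurableEmbedding (f := G) (s := Ioi (a + h))).mpr hG'

theorem MeasureTheory.IntegrableOn.fwdDiff_Ioi (hG : IntegrableOn G (Ioi a)) (hh : 0 ≤ h) :
    IntegrableOn (Δ_[h] G) (Ioi a) :=
  (hG.comp_add_right_Ioi hh).sub hG

theorem integral_Ioi_fwdDiff [NormedSpace ℝ E] (hG : IntegrableOn G (Ioi a)) (hh : 0 ≤ h) :
    ∫ u in Ioi a, Δ_[h] G u = -∫ u in Ioc a (a + h), G u := by
  have hsplit : ∫ u in Ioi a, G u = (∫ u in Ioc a (a + h), G u) + ∫ u in Ioi (a + h), G u := by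
    rw [← Ioc_union_Ioi_eq_Ioi (le_add_of_nonneg_right hh)]
    exact setIntegral_union Ioc_disjoint_Ioi_same measurableSet_Ioi
      (hG.mono_set Ioc_subset_Ioi_self) (hG.mono_set (Ioi_subset_Ioi (by linarith)))
  simp only [fwdDiff]
  rw [integral_sub (hG.comp_add_right_Ioi hh) hG, setIntegral_Ioi_comp_add_right, hsplit]
  abel

theorem abs_setIntegral_Ioc_le {G : ℝ → ℝ} {b M : ℝ} (hab : a ≤ b)
    (hG : ∀ u ∈ Ioc a b, |G u| ≤ M) : |∫ u in Ioc a b, G u| ≤ (b - a) * M := by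
  have := norm_setIntegral_le_of_norm_le_const (f := G) (μ := volume) measure_Ioc_lt_top
    fun u hu => (norm_eq_abs (G u)).trans_le (hG u hu)
  rwa [Real.volume_real_Ioc_of_le hab, mul_comm] at this

end HalfLineIntegrals

section CosineTransform

variable {F : ℝ → ℝ} {x h : ℝ}

theorem MeasureTheory.IntegrableOn.cos_mul {s : Set ℝ} (hF : IntegrableOn F s) (x : ℝ) :
    IntegrableOn (fun u => cos (u * x) * F u) s :=
  hF.bdd_mul (c := 1) (by fun_prop) (.of_forall fun u => by simpa using abs_cos_le_one (u * x))

theorem abs_cos_mul_le (y a : ℝ) : |cos y * a| ≤ |a| := by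
  rw [abs_mul]
  exact mul_le_of_le_one_left (abs_nonneg a) (abs_cos_le_one y)

theorem integral_Ioc_cos_mul_eq_zero (hh : 0 ≤ h) (hhx : h * x = π) :
    ∫ u in Ioc 0 h, cos (u * x) = 0 := by
  have hx : x ≠ 0 := by rintro rfl; simp [pi_ne_zero.symm] at hhx
  rw [← intervalIntegral.integral_of_le hh, intervalIntegral.integral_comp_mul_right cos hx,
    integral_cos]
  simp [hhx]

theorem integral_Ioi_cos_mul_fwdDiff (hF : IntegrableOn F (Ioi 0)) (hh : 0 ≤ h)
    (hhx : h * x = π) :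
    ∫ u in Ioi 0, cos (u * x) * Δ_[h] F u
      = (∫ u in Ioc 0 h, cos (u * x) * F u) - 2 * ∫ u in Ioi 0, cos (u * x) * F u := by
  set G : ℝ → ℝ := fun u => cos (u * x) * F u
  have hG : IntegrableOn G (Ioi 0) := hF.cos_mul x
  have hpoint : ∀ u, cos (u * x) * Δ_[h] F u = -Δ_[h] G u - 2 * G u := fun u => by
    simp only [G, fwdDiff, add_mul, hhx, cos_add_pi]
    ring
  simp_rw [hpoint]
  rw [integral_sub (f := fun u => -Δ_[h] G u) (hG.fwdDiff_Ioi hh).neg (hG.const_mul 2),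
    integral_neg, integral_const_mul, integral_Ioi_fwdDiff hG hh, zero_add, neg_neg]

theorem integral_Ioi_cos_mul_abs (F : ℝ → ℝ) (x : ℝ) :
    ∫ u in Ioi 0, cos (u * |x|) * F u = ∫ u in Ioi 0, cos (u * x) * F u := by
  rcases abs_choice x with hx | hx <;> simp [hx]

theorem abs_integral_Ioc_cos_mul_le_of_antitoneOn (hanti : AntitoneOn F (Icc 0 h)) (hh : 0 ≤ h)
    (hhx : h * x = π) : |∫ u in Ioc 0 h, cos (u * x) * F u| ≤ h * (F 0 - F h) := by
  have hF : IntegrableOn F (Ioc 0 h) :=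
    (hanti.integrableOn_isCompact isCompact_Icc).mono_set Ioc_subset_Icc_self
  have hcos : IntegrableOn (fun u => cos (u * x)) (Ioc 0 h) :=
    (continuous_cos.comp (continuous_id.mul continuous_const)).integrableOn_Ioc
  have hsub : ∫ u in Ioc 0 h, cos (u * x) * F u = ∫ u in Ioc 0 h, cos (u * x) * (F u - F 0) := by
    simp_rw [mul_sub]
    rw [integral_sub (hF.cos_mul x) (hcos.mul_const _), integral_mul_const,
      integral_Ioc_cos_mul_eq_zero hh hhx, zero_mul, sub_zero]
  rw [hsub]
  simpa using abs_setIntegral_Ioc_le hh fun u hu => (abs_cos_mul_le _ _).trans <| by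
    have hu : u ∈ Icc 0 h := Ioc_subset_Icc_self hu
    rw [abs_sub_comm, abs_of_nonneg (sub_nonneg.2 (hanti ⟨le_rfl, hh⟩ hu hu.1))]
    linarith [hanti hu ⟨hh, le_rfl⟩ hu.2]

theorem abs_integral_Ioi_cos_mul_fwdDiff_le (hF : IntegrableOn F (Ioi 0)) (hh : 0 ≤ h)
    (hΔ : ∀ u ∈ Ioi 0, 0 ≤ Δ_[h] F u) :
    |∫ u in Ioi 0, cos (u * x) * Δ_[h] F u| ≤ -∫ u in Ioc 0 h, F u := by
  calc |∫ u in Ioi 0, cos (u * x) * Δ_[h] F u| ≤ ∫ u in Ioi 0, Δ_[h] F u := by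
        rw [← norm_eq_abs]
        exact norm_integral_le_of_norm_le (hF.fwdDiff_Ioi hh) <|
          (ae_restrict_iff' measurableSet_Ioi).2 <| .of_forall fun u hu =>
            (abs_cos_mul_le _ _).trans (abs_of_nonneg (hΔ u hu)).le
    _ = -∫ u in Ioc 0 h, F u := by rw [integral_Ioi_fwdDiff hF hh, zero_add]

theorem ConvexOn.abs_integral_Ioi_cos_mul_le (hconv : ConvexOn ℝ (Ici 0) F)
    (hanti : AntitoneOn F (Ici 0)) (hF : IntegrableOn F (Ioi 0)) (hh : 0 < h) (hhx : h * x = π) :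
    |∫ u in Ioi 0, cos (u * x) * F u| ≤ h * (F 0 - F h) := by
  set D := Δ_[h] F
  have hD_mono : MonotoneOn D (Ici 0) := fun a ha b hb hab =>
    hconv.fwdDiff_le_fwdDiff ha (mem_Ici.2 (by linarith [mem_Ici.1 hb])) hab hh.le
  have hD_abs : ∀ u ∈ Ioc 0 h, |D u| ≤ F 0 - F h := fun u hu => by
    have hu : u ∈ Ici 0 := mem_Ici.2 hu.1.le
    have hD_nonpos : D u ≤ 0 :=
      sub_nonpos.2 (hanti hu (mem_Ici.2 (by linarith [hu.out])) (by linarith))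
    rw [abs_of_nonpos hD_nonpos]
    linarith [hD_mono self_mem_Ici hu hu.out, show D 0 = F h - F 0 by simp [D, fwdDiff]]
  have hDI : |∫ u in Ioc 0 h, D u| ≤ h * (F 0 - F h) := by
    simpa using abs_setIntegral_Ioc_le hh.le hD_abs
  have hA := abs_integral_Ioc_cos_mul_le_of_antitoneOn (hanti.mono Icc_subset_Ici_self) hh.le hhx
  have hB : |∫ u in Ioc 0 h, cos (u * x) * D u| ≤ h * (F 0 - F h) := by
    simpa using abs_setIntegral_Ioc_le hh.le fun u hu => (abs_cos_mul_le _ _).trans (hD_abs u hu)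
  have hK : |∫ u in Ioi 0, cos (u * x) * Δ_[h] D u| ≤ h * (F 0 - F h) :=
    (abs_integral_Ioi_cos_mul_fwdDiff_le (hF.fwdDiff_Ioi hh.le) hh.le fun u hu =>
      sub_nonneg.2 (hD_mono (mem_Ici.2 (le_of_lt hu)) (mem_Ici.2 (by linarith [hu.out]))
        (by linarith))).trans ((neg_le_abs _).trans hDI)
  have e₁ := integral_Ioi_cos_mul_fwdDiff (x := x) hF hh.le hhx
  have e₂ := integral_Ioi_cos_mul_fwdDiff (x := x) (hF.fwdDiff_Ioi hh.le) hh.le hhx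
  rw [abs_le] at hA hB hK ⊢
  constructor <;> linarith [hA.1, hA.2, hB.1, hB.2, hK.1, hK.2]

end CosineTransform

section StableDensity

variable {α : ℝ}

theorem convexOn_exp_neg_rpow (h0 : 0 ≤ α) (h1 : α ≤ 1) :
    ConvexOn ℝ (Ici 0) fun u : ℝ => exp (-u ^ α) := by
  have hconv : ConvexOn ℝ univ fun y : ℝ => exp (-y) := by
    simpa [Function.comp_def] using convexOn_exp.comp_linearMap (-LinearMap.id)
  have himage : Convex ℝ ((· ^ α) '' Ici (0 : ℝ)) :=
    (isPreconnected_Ici.image _ (continuous_rpow_const h0).continuousOn).ordConnected.convex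
  exact (hconv.subset (subset_univ _) himage).comp_concaveOn (concaveOn_rpow h0 h1)
    fun a _ b _ hab => exp_le_exp.2 (neg_le_neg hab)

theorem antitoneOn_exp_neg_rpow (h0 : 0 ≤ α) : AntitoneOn (fun u : ℝ => exp (-u ^ α)) (Ici 0) :=
  fun _ ha _ _ hab => exp_le_exp.2 (neg_le_neg (rpow_le_rpow ha hab h0))

theorem integrableOn_exp_neg_rpow (h0 : 0 < α) :
    IntegrableOn (fun u : ℝ => exp (-u ^ α)) (Ioi 0) := by
  simpa using integrableOn_rpow_mul_exp_neg_rpow (s := 0) (by norm_num) h0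

theorem abs_integral_Ioi_cos_mul_exp_neg_rpow_le (h0 : 0 < α) (h1 : α ≤ 1) {x : ℝ} (hx : 0 < x) :
    |∫ u in Ioi 0, cos (u * x) * exp (-u ^ α)| ≤ (π / x) ^ (α + 1) := by
  have hh : 0 < π / x := div_pos pi_pos hx
  calc |∫ u in Ioi 0, cos (u * x) * exp (-u ^ α)|
      ≤ π / x * (exp (-0 ^ α) - exp (-(π / x) ^ α)) :=
        (convexOn_exp_neg_rpow h0.le h1).abs_integral_Ioi_cos_mul_le
          (antitoneOn_exp_neg_rpow h0.le) (integrableOn_exp_neg_rpow h0) hh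
          (div_mul_cancel₀ _ hx.ne')
    _ ≤ π / x * (π / x) ^ α := by
        rw [zero_rpow h0.ne', neg_zero, exp_zero]
        gcongr
        linarith [add_one_le_exp (-(π / x) ^ α)]
    _ = (π / x) ^ (α + 1) := by rw [rpow_add_one hh.ne', mul_comm]

end StableDensity

theorem smalltime_prop52_a (α : ℝ) (h0 : 0 < α) (h1 : α ≤ 1)
    (p₁ : ℝ → ℝ)
    (hp : ∀ x : ℝ, p₁ x = (1 / π) * ∫ u in Ioi (0:ℝ), Real.cos (u * x) * Real.exp (-(u ^ α))) :
    ∃ c : ℝ, ∀ x : ℝ, |x| ^ (α + 1) * |p₁ x| ≤ c := by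
  refine ⟨π ^ α, fun x => ?_⟩
  rcases eq_or_ne x 0 with rfl | hx
  · rw [abs_zero, zero_rpow (by positivity), zero_mul]
    positivity
  have hx' : 0 < |x| := abs_pos.2 hx
  have hI := abs_integral_Ioi_cos_mul_exp_neg_rpow_le h0 h1 hx'
  rw [integral_Ioi_cos_mul_abs] at hI
  rw [hp x, abs_mul, abs_of_pos (by positivity : 0 < 1 / π)]
  calc |x| ^ (α + 1) * (1 / π * |∫ u in Ioi 0, cos (u * x) * exp (-u ^ α)|)
      ≤ |x| ^ (α + 1) * (1 / π * (π / |x|) ^ (α + 1)) := by gcongr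
    _ = π ^ α := by
        rw [div_rpow pi_pos.le hx'.le, rpow_add_one pi_ne_zero]
        field_simp
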